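/- arXiv:2006.04583 — 2 statements merged into one kernel-verified Lean document; each statement's English description precedes it below -/
import Mathlib

section
/- Let H be a finite connected simple graph with no false twins, and let B = {v, w} be a biclique of H consisting of a single edge. If v and w have at least two common neighbors, then at least 3 bicliques of H distinct from B have nonempty intersection with B; equivalently, the vertex of KB(H) corresponding to B has degree at least 3. -/
/-!
Let `x, y` be two common neighbours of `v` and `w`. A biclique is triangle-free, so every
biclique through the edge `vx` avoids `w`, and so on; extending the four edges `vx, wx, vy, wy`
to bicliques gives bicliques through `v` but not `w` and bicliques through `w` but not `v`.
Three distinct ones among them exist unless a single biclique `A` contains `v, x, y` (and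
another one contains `w, x, y`). In that case `x, y` lie in the same part of `A`, and a vertex
`z` adjacent to exactly one of them, which exists because `x, y` are not false twins, cannot
lie in `A`; a biclique through `v` and `z` (along the path `v, x, z` or `v, y, z`) is the third.
-/

open SimpleGraph

variable {V : Type}

/-- `B1`, `B2` are the two (nonempty) parts of an induced complete bipartite subgraph:
they are disjoint, each part is independent, and all edges between the parts are present. -/
def IsCBP (H : SimpleGraph V) (B1 B2 : Set V) : Prop :=
  B1.Nonempty ∧ B2.Nonempty ∧ Disjoint B1 B2 ∧
    (∀ a ∈ B1, ∀ b ∈ B1, ¬H.Adj a b) ∧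
    (∀ a ∈ B2, ∀ b ∈ B2, ¬H.Adj a b) ∧
    (∀ a ∈ B1, ∀ b ∈ B2, H.Adj a b)

/-- A set of vertices inducing a complete bipartite subgraph `K_{m,n}`, `m, n ≥ 1`. -/
def IsCompleteBipartiteSet (H : SimpleGraph V) (S : Set V) : Prop :=
  ∃ B1 B2 : Set V, IsCBP H B1 B2 ∧ B1 ∪ B2 = S

/-- A biclique: a maximal set of vertices inducing a complete bipartite subgraph. -/
def IsBiclique (H : SimpleGraph V) (S : Set V) : Prop :=
  IsCompleteBipartiteSet H S ∧
    ∀ T : Set V, IsCompleteBipartiteSet H T → S ⊆ T → S = T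

/-- The biclique graph `KB(H)`: the intersection graph of the bicliques of `H`. -/
def KB (H : SimpleGraph V) : SimpleGraph {S : Set V // IsBiclique H S} :=
  SimpleGraph.fromRel fun A B => (A.1 ∩ B.1).Nonempty

lemma isCompleteBipartiteSet_pair {H : SimpleGraph V} {a b : V} (h : H.Adj a b) :
    IsCompleteBipartiteSet H {a, b} := by
  refine ⟨{a}, {b}, ⟨⟨a, rfl⟩, ⟨b, rfl⟩, Set.disjoint_singleton.mpr h.ne, ?_, ?_, ?_⟩, rfl⟩ <;>
    simp only [Set.mem_singleton_iff] <;> rintro p rfl q rfl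
  exacts [H.loopless.irrefl _, H.loopless.irrefl _, h]

lemma isCompleteBipartiteSet_wedge {H : SimpleGraph V} {x a b : V} (hxa : H.Adj x a)
    (hxb : H.Adj x b) (hab : ¬H.Adj a b) (hne : a ≠ b) : IsCompleteBipartiteSet H {x, a, b} := by
  refine ⟨{x}, {a, b}, ⟨⟨x, rfl⟩, ⟨a, Or.inl rfl⟩, ?_, ?_, ?_, ?_⟩, rfl⟩
  · rw [Set.disjoint_singleton_left]
    rintro (rfl | rfl)
    exacts [hxa.ne rfl, hxb.ne rfl]
  · simp only [Set.mem_singleton_iff]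
    rintro p rfl q rfl
    exact H.loopless.irrefl _
  · simp only [Set.mem_insert_iff, Set.mem_singleton_iff]
    rintro p (rfl | rfl) q (rfl | rfl)
    exacts [H.loopless.irrefl _, hab, fun h => hab h.symm, H.loopless.irrefl _]
  · simp only [Set.mem_singleton_iff, Set.mem_insert_iff]
    rintro p rfl q (rfl | rfl)
    exacts [hxa, hxb]

lemma exists_isBiclique_superset [Finite V] {H : SimpleGraph V} {S : Set V}
    (hS : IsCompleteBipartiteSet H S) : ∃ T, IsBiclique H T ∧ S ⊆ T := by
  obtain ⟨T, hST, hT⟩ := Finite.exists_le_maximal (p := IsCompleteBipartiteSet H) hS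
  exact ⟨T, ⟨hT.prop, fun T' hT' hsub => hT.eq_of_le hT' hsub⟩, hST⟩

namespace IsCompleteBipartiteSet

variable {H : SimpleGraph V} {S : Set V}

/-- Inside `S`, adjacency means lying in different parts, and there are only two parts. -/
lemma adj_iff (hS : IsCompleteBipartiteSet H S) {a b c : V} (ha : a ∈ S) (hb : b ∈ S)
    (hc : c ∈ S) : H.Adj a b ↔ (H.Adj a c ↔ ¬H.Adj b c) := by
  obtain ⟨B₁, B₂, ⟨-, -, hdisj, h₁, h₂, h₁₂⟩, rfl⟩ := hS
  have n₁ : ∀ {p}, p ∈ B₁ → p ∉ B₂ := fun h₁ h₂ => hdisj.notMem_of_mem_left h₁ h₂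
  have adj : ∀ p ∈ B₁ ∪ B₂, ∀ q ∈ B₁ ∪ B₂, H.Adj p q ↔ (p ∈ B₁ ↔ q ∈ B₂) := by
    rintro p (hp | hp) q (hq | hq)
    · exact iff_of_false (h₁ p hp q hq) fun h => n₁ hq (h.mp hp)
    · exact iff_of_true (h₁₂ p hp q hq) (iff_of_true hp hq)
    · exact iff_of_true (h₁₂ q hq p hp).symm (iff_of_false (fun h => n₁ h hp) (n₁ hq))
    · exact iff_of_false (h₂ p hp q hq) fun h => n₁ (h.mpr hq) hp
  have side : ∀ p ∈ B₁ ∪ B₂, p ∈ B₁ ↔ p ∉ B₂ := fun p hp => ⟨n₁, hp.resolve_right⟩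
  rw [adj a ha b hb, adj a ha c hc, adj b hb c hc]
  have := side a ha
  have := side b hb
  have := side c hc
  tauto

lemma not_adj_of_adj_of_adj (hS : IsCompleteBipartiteSet H S) {a b c : V} (ha : a ∈ S)
    (hb : b ∈ S) (hc : c ∈ S) (hab : H.Adj a b) (hac : H.Adj a c) : ¬H.Adj b c := by
  have := hS.adj_iff ha hb hc
  tauto

lemma notMem_of_not_adj_iff {v x y z : V} (hS : IsCompleteBipartiteSet H S) (hv : v ∈ S)
    (hx : x ∈ S) (hy : y ∈ S) (hvx : H.Adj v x) (hvy : H.Adj v y)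
    (hz : ¬(H.Adj x z ↔ H.Adj y z)) : z ∉ S := by
  intro hzS
  have hxy : ¬H.Adj x y := hS.not_adj_of_adj_of_adj hv hx hy hvx hvy
  have := hS.adj_iff hx hy hzS
  tauto

end IsCompleteBipartiteSet

lemma exists_isBiclique_of_triangle [Finite V] {H : SimpleGraph V} {v w x : V}
    (hvw : H.Adj v w) (hvx : H.Adj v x) (hwx : H.Adj w x) :
    ∃ S, IsBiclique H S ∧ v ∈ S ∧ x ∈ S ∧ w ∉ S := by
  obtain ⟨S, hS, hsub⟩ := exists_isBiclique_superset (isCompleteBipartiteSet_pair hvx)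
  have hv : v ∈ S := hsub (Or.inl rfl)
  have hx : x ∈ S := hsub (Or.inr rfl)
  exact ⟨S, hS, hv, hx, fun hw => hS.1.not_adj_of_adj_of_adj hv hw hx hvw hvx hwx⟩

lemma exists_isBiclique_of_adj_of_adj [Finite V] {H : SimpleGraph V} {v x z : V}
    (hvx : H.Adj v x) (hxz : H.Adj x z) (hvz : v ≠ z) :
    ∃ S, IsBiclique H S ∧ v ∈ S ∧ z ∈ S := by
  by_cases hadj : H.Adj v z
  · obtain ⟨S, hS, hsub⟩ := exists_isBiclique_superset (isCompleteBipartiteSet_pair hadj)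
    exact ⟨S, hS, hsub (Or.inl rfl), hsub (Or.inr rfl)⟩
  · obtain ⟨S, hS, hsub⟩ :=
      exists_isBiclique_superset (isCompleteBipartiteSet_wedge hvx.symm hxz hadj hvz)
    exact ⟨S, hS, hsub (Or.inr (Or.inl rfl)), hsub (Or.inr (Or.inr rfl))⟩

lemma exists_isBiclique_of_not_adj_iff [Finite V] {H : SimpleGraph V} {v x y z : V}
    (hvx : H.Adj v x) (hvy : H.Adj v y) (hz : ¬(H.Adj x z ↔ H.Adj y z)) :
    ∃ S, IsBiclique H S ∧ v ∈ S ∧ z ∈ S := by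
  have hvz : v ≠ z := by rintro rfl; exact hz ⟨fun _ => hvy.symm, fun _ => hvx.symm⟩
  by_cases hxz : H.Adj x z
  · exact exists_isBiclique_of_adj_of_adj hvx hxz hvz
  · exact exists_isBiclique_of_adj_of_adj hvy (by tauto) hvz

lemma mem_setOf_isBiclique_meeting {H : SimpleGraph V} {B S : Set V} (hS : IsBiclique H S)
    {a t : V} (haS : a ∈ S) (haB : a ∈ B) (htS : t ∈ S) (htB : t ∉ B) :
    S ∈ {S : Set V | IsBiclique H S ∧ S ≠ B ∧ (S ∩ B).Nonempty} :=
  ⟨hS, fun h => htB (h ▸ htS), a, haS, haB⟩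

theorem stmt_6_general {V : Type} [Fintype V] (H : SimpleGraph V)
    (htwinfree : ∀ v w : V, v ≠ w → H.neighborSet v ≠ H.neighborSet w)
    (v w : V) (hadj : H.Adj v w)
    (hcn : 2 ≤ (H.neighborSet v ∩ H.neighborSet w).ncard) :
    3 ≤ {S : Set V | IsBiclique H S ∧ S ≠ {v, w} ∧ (S ∩ {v, w}).Nonempty}.ncard := by
  obtain ⟨x, ⟨hvx, hwx⟩, y, ⟨hvy, hwy⟩, hxy⟩ := (Set.one_lt_ncard (Set.toFinite _)).mp hcn
  have hx : x ∉ ({v, w} : Set V) := by rintro (rfl | rfl) <;> simp_all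
  have hy : y ∉ ({v, w} : Set V) := by rintro (rfl | rfl) <;> simp_all
  have hv : v ∈ ({v, w} : Set V) := Or.inl rfl
  have hw : w ∈ ({v, w} : Set V) := Or.inr rfl
  obtain ⟨A, hA, hvA, hxA, hwA⟩ := exists_isBiclique_of_triangle hadj hvx hwx
  obtain ⟨B, hB, hwB, hxB, hvB⟩ := exists_isBiclique_of_triangle hadj.symm hwx hvx
  obtain ⟨C, hC, hvC, hyC, hwC⟩ := exists_isBiclique_of_triangle hadj hvy hwy
  obtain ⟨D, hD, hwD, hyD, hvD⟩ := exists_isBiclique_of_triangle hadj.symm hwy hvy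
  have hA' := mem_setOf_isBiclique_meeting hA hvA hv hxA hx
  have hB' := mem_setOf_isBiclique_meeting hB hwB hw hxB hx
  refine (Set.two_lt_ncard_iff (Set.toFinite _)).mpr ?_
  by_cases hAC : A = C; swap
  · exact ⟨A, B, C, hA', hB', mem_setOf_isBiclique_meeting hC hvC hv hyC hy,
      ne_of_mem_of_not_mem' hvA hvB, hAC, ne_of_mem_of_not_mem' hwB hwC⟩
  by_cases hBD : B = D; swap
  · exact ⟨A, B, D, hA', hB', mem_setOf_isBiclique_meeting hD hwD hw hyD hy,
      ne_of_mem_of_not_mem' hvA hvB, ne_of_mem_of_not_mem' hvA hvD, hBD⟩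
  subst hAC hBD
  obtain ⟨z, hz⟩ : ∃ z, ¬(H.Adj x z ↔ H.Adj y z) :=
    not_forall.mp fun h => htwinfree x y hxy (Set.ext h)
  have hzA : z ∉ A := hA.1.notMem_of_not_adj_iff hvA hxA hyC hvx hvy hz
  have hzvw : z ∉ ({v, w} : Set V) := by rintro (rfl | rfl) <;> simp_all [adj_comm]
  obtain ⟨U, hU, hvU, hzU⟩ := exists_isBiclique_of_not_adj_iff hvx hvy hz
  exact ⟨A, B, U, hA', hB', mem_setOf_isBiclique_meeting hU hvU hv hzU hzvw,
    ne_of_mem_of_not_mem' hvA hvB, (ne_of_mem_of_not_mem' hzU hzA).symm,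
    (ne_of_mem_of_not_mem' hvU hvB).symm⟩

/-- In a connected false-twin-free graph, if the edge biclique `B = {v, w}` has at least
two common neighbors of `v` and `w`, then `B` meets at least 3 other bicliques. -/
theorem stmt_6 {V : Type} [Fintype V] (H : SimpleGraph V) (hconn : H.Connected)
    (htwinfree : ∀ v w : V, v ≠ w → H.neighborSet v ≠ H.neighborSet w)
    (v w : V) (hvw : v ≠ w) (hadj : H.Adj v w) (hB : IsBiclique H {v, w})
    (hcn : 2 ≤ (H.neighborSet v ∩ H.neighborSet w).ncard) :
    3 ≤ {S : Set V | IsBiclique H S ∧ S ≠ {v, w} ∧ (S ∩ {v, w}).Nonempty}.ncard :=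
  stmt_6_general H htwinfree v w hadj hcn
end

section
/- Let H be a finite connected simple graph with at least 4 vertices containing vertices a, b, c such that N(a) = {b} and N(b) = {a, c}. Then B = {a, b, c} is a biclique of H, the bicliques of the graph H − {a} are exactly the bicliques of H other than B, and KB(H − {a}) is isomorphic to KB(H) − {q}, where q is the vertex of KB(H) corresponding to the biclique B. -/
open SimpleGraph

variable {V : Type}

/-!
Every complete bipartite set through the pendant vertex `a` lies in `N[b] = {a, b, c}`, which is
itself complete bipartite (`b` against `{a, c}`), so `{a, b, c}` is the only biclique containing
`a`. The other bicliques avoid `a` and are exactly the bicliques of `H - a`: a biclique of `H - a`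
could only fail to stay maximal in `H` by lying in `{b, c}`, but connectivity and `|V| ≥ 4` give a
neighbour `d ∉ {a, b, c}` of `c`, and `{b, c, d}` is complete bipartite in `H - a`. Taking images
under the inclusion then identifies the two biclique graphs.
-/

namespace IsCBP

variable {H : SimpleGraph V} {B1 B2 : Set V}

theorem symm (h : IsCBP H B1 B2) : IsCBP H B2 B1 := by
  obtain ⟨h1, h2, hd, hi1, hi2, he⟩ := h
  exact ⟨h2, h1, hd.symm, hi2, hi1, fun x hx y hy => (he y hy x hx).symm⟩

theorem subset_neighborSet_left (h : IsCBP H B1 B2) {y : V} (hy : y ∈ B2) :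
    B1 ⊆ H.neighborSet y :=
  fun x hx => (h.2.2.2.2.2 x hx y hy).symm

theorem subset_neighborSet_right (h : IsCBP H B1 B2) {x : V} (hx : x ∈ B1) :
    B2 ⊆ H.neighborSet x :=
  h.symm.subset_neighborSet_left hx

end IsCBP

section Induce

variable {H : SimpleGraph V} {s : Set V}

theorem isCBP_induce_iff {T1 T2 : Set s} :
    IsCBP (H.induce s) T1 T2 ↔ IsCBP H (Subtype.val '' T1) (Subtype.val '' T2) := by
  simp [IsCBP, Set.disjoint_image_iff Subtype.val_injective]

theorem isCompleteBipartiteSet_induce_iff {T : Set s} :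
    IsCompleteBipartiteSet (H.induce s) T ↔ IsCompleteBipartiteSet H (Subtype.val '' T) := by
  constructor
  · rintro ⟨T1, T2, h, rfl⟩
    exact ⟨_, _, isCBP_induce_iff.1 h, (Set.image_union _ _ _).symm⟩
  · rintro ⟨S1, S2, h, hS⟩
    have hsub : S1 ∪ S2 ⊆ Set.range Subtype.val := hS ▸ Set.image_subset_range _ _
    refine ⟨Subtype.val ⁻¹' S1, Subtype.val ⁻¹' S2, isCBP_induce_iff.2 ?_, ?_⟩
    · rwa [Set.image_preimage_eq_of_subset (Set.union_subset_iff.1 hsub).1,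
        Set.image_preimage_eq_of_subset (Set.union_subset_iff.1 hsub).2]
    · rw [← Set.preimage_union, hS, Set.preimage_image_eq _ Subtype.val_injective]

theorem isBiclique_induce_iff {T : Set s} :
    IsBiclique (H.induce s) T ↔ IsCompleteBipartiteSet H (Subtype.val '' T) ∧
      ∀ S, IsCompleteBipartiteSet H S → S ⊆ s → Subtype.val '' T ⊆ S → Subtype.val '' T = S := by
  have himage_preimage {S : Set V} (hS : S ⊆ s) : Subtype.val '' (Subtype.val ⁻¹' S : Set s) = S :=
    Set.image_preimage_eq_of_subset (by rwa [Subtype.range_coe])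
  refine (and_congr isCompleteBipartiteSet_induce_iff ⟨fun hmax S hS hSs hTS => ?_,
    fun hmax T' hT' hTT' => ?_⟩)
  · rw [← himage_preimage hSs] at hS ⊢
    rw [hmax _ (isCompleteBipartiteSet_induce_iff.2 hS) (Set.image_subset_iff.1 hTS)]
  · refine Subtype.val_injective.image_injective (hmax _ ?_ ?_ (Set.image_mono hTT'))
    · exact isCompleteBipartiteSet_induce_iff.1 hT'
    · exact Subtype.coe_image_subset s T'

theorem IsBiclique.of_image_val {T : Set s} (hT : IsBiclique H (Subtype.val '' T)) :
    IsBiclique (H.induce s) T :=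
  isBiclique_induce_iff.2 ⟨hT.1, fun S hS _ => hT.2 S hS⟩

end Induce

theorem KB_adj_iff {H : SimpleGraph V} {A B : {S : Set V // IsBiclique H S}} :
    (KB H).Adj A B ↔ A ≠ B ∧ (A.1 ∩ B.1).Nonempty := by
  rw [KB, fromRel_adj, Set.inter_comm B.1, or_self]

def KB.induceIso {H : SimpleGraph V} {s : Set V} (P : Set V → Prop)
    (hbic : ∀ T : Set s, IsBiclique (H.induce s) T ↔
      IsBiclique H (Subtype.val '' T) ∧ P (Subtype.val '' T))
    (hsub : ∀ S, IsBiclique H S → P S → S ⊆ s) :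
    KB (H.induce s) ≃g (KB H).induce {S | P S.1} where
  toFun T := ⟨⟨_, ((hbic T.1).1 T.2).1⟩, ((hbic T.1).1 T.2).2⟩
  invFun S := ⟨Subtype.val ⁻¹' S.1.1, (hbic _).2 <| by
    rw [Set.image_preimage_eq_of_subset (by rw [Subtype.range_coe]; exact hsub _ S.1.2 S.2)]
    exact ⟨S.1.2, S.2⟩⟩
  left_inv T := Subtype.ext (Set.preimage_image_eq _ Subtype.val_injective)
  right_inv S := Subtype.ext <| Subtype.ext <| Set.image_preimage_eq_of_subset <| by
    rw [Subtype.range_coe]; exact hsub _ S.1.2 S.2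
  map_rel_iff' {T T'} := by
    simp only [Equiv.coe_fn_mk, comap_adj, Function.Embedding.coe_subtype, KB_adj_iff, ne_eq,
      Subtype.ext_iff, Subtype.val_injective.image_injective.eq_iff,
      ← Set.image_inter Subtype.val_injective, Set.image_nonempty]

theorem isCompleteBipartiteSet_of_adj_of_adj {H : SimpleGraph V} {x y z : V} (hxy : H.Adj x y)
    (hxz : H.Adj x z) (hyz : ¬H.Adj y z) : IsCompleteBipartiteSet H {y, x, z} := by
  refine ⟨{x}, {y, z}, ⟨Set.singleton_nonempty x, Set.insert_nonempty y {z}, ?_, ?_, ?_, ?_⟩, ?_⟩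
  · simp [hxy.ne, hxz.ne]
  · simp
  · simp only [Set.mem_insert_iff, Set.mem_singleton_iff]
    rintro _ (rfl | rfl) _ (rfl | rfl) <;> simp_all [H.adj_comm]
  · simp [hxy, hxz]
  · ext; simp; tauto

section PendantPath

variable {H : SimpleGraph V} {a b c : V}

theorem IsCompleteBipartiteSet.subset_of_mem_pendant (hNa : H.neighborSet a = {b})
    (hNb : H.neighborSet b = {a, c}) {S : Set V} (hS : IsCompleteBipartiteSet H S)
    (ha : a ∈ S) : S ⊆ {a, b, c} := by
  suffices key : ∀ B1 B2, IsCBP H B1 B2 → a ∈ B1 → B1 ∪ B2 ⊆ {a, b, c} by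
    obtain ⟨B1, B2, h, rfl⟩ := hS
    rcases ha with ha | ha
    · exact key B1 B2 h ha
    · exact Set.union_comm B1 B2 ▸ key B2 B1 h.symm ha
  intro B1 B2 h ha
  have hB2 : B2 ⊆ {b} := hNa ▸ h.subset_neighborSet_right ha
  have hbB2 : b ∈ B2 := by
    obtain ⟨y, hy⟩ := h.2.1
    rwa [← Set.mem_singleton_iff.1 (hB2 hy)]
  have hB1 : B1 ⊆ {a, c} := hNb ▸ h.subset_neighborSet_left hbB2
  intro x hx
  rcases hx with hx | hx
  · rcases hB1 hx with rfl | rfl <;> simp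
  · rw [hB2 hx]; simp

theorem isBiclique_pendant (hNa : H.neighborSet a = {b}) (hNb : H.neighborSet b = {a, c}) :
    IsBiclique H {a, b, c} := by
  have hab : H.Adj a b := by simp [← mem_neighborSet, hNa]
  have hbc : H.Adj b c := by simp [← mem_neighborSet, hNb]
  have hac : ¬H.Adj a c := fun h =>
    hbc.ne (show c = b by simpa [← mem_neighborSet, hNa] using h).symm
  refine ⟨isCompleteBipartiteSet_of_adj_of_adj hab.symm hbc hac, fun S hS hsub => ?_⟩
  exact hsub.antisymm (hS.subset_of_mem_pendant hNa hNb (hsub (Set.mem_insert a _)))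

theorem IsBiclique.eq_of_mem_pendant (hNa : H.neighborSet a = {b})
    (hNb : H.neighborSet b = {a, c}) {S : Set V} (hS : IsBiclique H S) (ha : a ∈ S) :
    S = {a, b, c} :=
  hS.2 _ (isBiclique_pendant hNa hNb).1 (hS.1.subset_of_mem_pendant hNa hNb ha)

theorem exists_adj_notMem_pendant [Fintype V] (hconn : H.Connected) (hcard : 4 ≤ Fintype.card V)
    (hNa : H.neighborSet a = {b}) (hNb : H.neighborSet b = {a, c}) :
    ∃ d, H.Adj c d ∧ d ∉ ({a, b, c} : Set V) := by
  classical
  obtain ⟨d₀, -, hd₀⟩ := Finset.exists_mem_notMem_of_card_lt_card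
    (s := {a, b, c}) (t := Finset.univ) (Finset.card_le_three.trans_lt hcard)
  -- a path from `c` to `d₀` leaves `{a, b, c}` somewhere, and `a` and `b` have no edge out of it
  obtain ⟨⟨⟨x, y⟩, hxy⟩, -, hx, hy⟩ :=
    (hconn.preconnected c d₀).some.exists_boundary_dart {a, b, c} (by simp) (by simpa using hd₀)
  rcases hx with rfl | rfl | rfl
  · have hyb : y = b := by simpa [← mem_neighborSet, hNa] using hxy
    simp [hyb] at hy
  · have hyac : y = a ∨ y = c := by simpa [← mem_neighborSet, hNb] using hxy
    rcases hyac with rfl | rfl <;> simp at hy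
  · exact ⟨y, hxy, hy⟩

theorem isBiclique_induce_compl_iff_pendant (hNa : H.neighborSet a = {b})
    (hNb : H.neighborSet b = {a, c}) {d : V} (hcd : H.Adj c d) (hd : d ∉ ({a, b, c} : Set V))
    (T : Set ({a}ᶜ : Set V)) :
    IsBiclique (H.induce {a}ᶜ) T ↔
      IsBiclique H (Subtype.val '' T) ∧ Subtype.val '' T ≠ ({a, b, c} : Set V) := by
  refine ⟨fun hT => ?_, fun hT => hT.1.of_image_val⟩
  obtain ⟨hcbs, hmax⟩ := isBiclique_induce_iff.1 hT
  have haT : a ∉ Subtype.val '' T := fun h => Subtype.coe_image_subset _ T h rfl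
  refine ⟨⟨hcbs, fun S hS hTS => ?_⟩, fun h => haT (h ▸ Set.mem_insert a _)⟩
  by_cases haS : a ∈ S
  swap
  · exact hmax S hS (Set.subset_compl_singleton_iff.2 haS) hTS
  -- a biclique of `H - a` inside `{b, c}` would be swallowed by the complete bipartite `{b, c, d}`
  simp only [Set.mem_insert_iff, Set.mem_singleton_iff, not_or] at hd
  obtain ⟨hda, hdb, hdc⟩ := hd
  have hab : H.Adj a b := by simp [← mem_neighborSet, hNa]
  have hbc : H.Adj b c := by simp [← mem_neighborSet, hNb]
  have hca : c ≠ a := by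
    rintro rfl
    exact hdb (by simpa [← mem_neighborSet, hNa] using hcd)
  have hbd : ¬H.Adj b d := by simpa [← mem_neighborSet, hNb] using ⟨hda, hdc⟩
  have hTbc : Subtype.val '' T ⊆ {b, c} := fun x hx => by
    rcases hS.subset_of_mem_pendant hNa hNb haS (hTS hx) with rfl | hx'
    · exact absurd hx haT
    · exact hx'
  have hTbcd := hmax _ (isCompleteBipartiteSet_of_adj_of_adj hbc.symm hcd hbd)
    (by simp [hab.ne, hca.symm, Ne.symm hda])
    (hTbc.trans (by simp [Set.insert_subset_iff]))
  have hdT : d ∈ Subtype.val '' T := hTbcd ▸ by simp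
  rcases hTbc hdT with h | h <;> contradiction

end PendantPath

theorem stmt_7_general {V : Type} [Fintype V] (H : SimpleGraph V) (hconn : H.Connected)
    (hcard : 4 ≤ Fintype.card V) (a b c : V)
    (hNa : H.neighborSet a = {b}) (hNb : H.neighborSet b = {a, c}) :
    IsBiclique H {a, b, c} ∧
    (∀ T : Set ({a}ᶜ : Set V),
        IsBiclique (SimpleGraph.induce ({a}ᶜ : Set V) H) T ↔
          IsBiclique H (Subtype.val '' T) ∧ Subtype.val '' T ≠ ({a, b, c} : Set V)) ∧
    Nonempty (KB (SimpleGraph.induce ({a}ᶜ : Set V) H) ≃g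
      SimpleGraph.induce {S : {T : Set V // IsBiclique H T} | S.1 ≠ {a, b, c}} (KB H)) := by
  obtain ⟨d, hcd, hd⟩ := exists_adj_notMem_pendant hconn hcard hNa hNb
  have hbic := isBiclique_induce_compl_iff_pendant hNa hNb hcd hd
  refine ⟨isBiclique_pendant hNa hNb, hbic, ⟨KB.induceIso (· ≠ {a, b, c}) hbic fun S hS hne => ?_⟩⟩
  exact Set.subset_compl_singleton_iff.2 fun ha => hne (hS.eq_of_mem_pendant hNa hNb ha)

/-- If `N(a) = {b}` and `N(b) = {a, c}`, then `B = {a, b, c}` is a biclique, the bicliques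
of `H - {a}` are exactly the bicliques of `H` other than `B`, and
`KB(H - {a}) ≅ KB(H) - {q}` where `q` corresponds to `B`. -/
theorem stmt_7 {V : Type} [Fintype V] (H : SimpleGraph V) (hconn : H.Connected)
    (hcard : 4 ≤ Fintype.card V) (a b c : V) (hac : a ≠ c)
    (hNa : H.neighborSet a = {b}) (hNb : H.neighborSet b = {a, c}) :
    IsBiclique H {a, b, c} ∧
    (∀ T : Set ({a}ᶜ : Set V),
        IsBiclique (SimpleGraph.induce ({a}ᶜ : Set V) H) T ↔
          IsBiclique H (Subtype.val '' T) ∧ Subtype.val '' T ≠ ({a, b, c} : Set V)) ∧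
    Nonempty (KB (SimpleGraph.induce ({a}ᶜ : Set V) H) ≃g
      SimpleGraph.induce {S : {T : Set V // IsBiclique H T} | S.1 ≠ {a, b, c}} (KB H)) :=
  stmt_7_general H hconn hcard a b c hNa hNb
end
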